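/- arXiv:2209.05550 — 3 statements merged into one kernel-verified Lean document; each statement's English description precedes it below -/
import Mathlib

section
/- For each u ∈ [U] and i ∈ [n], the variance of G_{u,i} = (V_{u,i} − Y_{u,i})² − V_{u,i} − Y_{u,i} equals Var(G_{u,i}) = 4·m³·(P_{u,i} − Q_{u,i})²·(P_{u,i} + Q_{u,i}) + 2·m²·(P_{u,i} + Q_{u,i})². -/
/-!
Work in the falling-factorial basis `x^{(k)} = x (x - 1) ⋯ (x - k + 1)`. A Poisson(`r`) variable
has factorial moments `E[V^{(k)}] = r^k`, so for independent `V ~ Poisson(a)`, `Y ~ Poisson(b)`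
we get `E[V^{(j)} Y^{(k)}] = a^j b^k`. Since `G = V^{(2)} - 2 V Y + Y^{(2)}`, and `G²` is likewise
an explicit combination of the `V^{(j)} Y^{(k)}`, this gives `E G = (a - b)²` and `E G²` as a
polynomial in `a, b`, and `Var G = E G² - (E G)²` reduces to the stated value.
-/

open MeasureTheory ProbabilityTheory NNReal Finset Real
open scoped Nat

theorem Nat.cast_descFactorial_eq_prod_range {R : Type*} [CommRing R] (n k : ℕ) :
    (n.descFactorial k : R) = ∏ j ∈ range k, ((n : R) - j) := by
  rw [← descPochhammer_eval_eq_descFactorial, descPochhammer_eval_eq_prod_range]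

namespace ProbabilityTheory

theorem hasSum_descFactorial_poissonMeasure (r : ℝ≥0) (k : ℕ) :
    HasSum (fun n ↦ (exp (-r) * r ^ n / n !) • (n.descFactorial k : ℝ)) (r ^ k) := by
  rw [← hasSum_nat_add_iff' k]
  have hlow : ∑ n ∈ range k, (exp (-r) * r ^ n / n !) • (n.descFactorial k : ℝ) = 0 :=
    sum_eq_zero fun n hn ↦ by simp [Nat.descFactorial_eq_zero_iff_lt.2 (mem_range.1 hn)]
  have hshift (n : ℕ) : (exp (-r) * r ^ (n + k) / (n + k)!) • ((n + k).descFactorial k : ℝ) =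
      r ^ k * (exp (-r) * r ^ n / n !) := by
    have hfact : ((n + k)! : ℝ) = n ! * (n + k).descFactorial k := by
      rw [Nat.add_descFactorial_eq_ascFactorial]
      exact_mod_cast (Nat.factorial_mul_ascFactorial n k).symm
    rw [hfact, smul_eq_mul, pow_add]
    field_simp
  rw [hlow, sub_zero]
  simpa only [hshift, mul_one] using (hasSum_one_poissonMeasure r).mul_left ((r : ℝ) ^ k)

theorem integrable_descFactorial_poissonMeasure (r : ℝ≥0) (k : ℕ) :
    Integrable (fun n : ℕ ↦ (n.descFactorial k : ℝ)) Po(r) :=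
  integrable_poissonMeasure_iff.2 <| by
    simpa using (hasSum_descFactorial_poissonMeasure r k).summable

theorem integral_descFactorial_poissonMeasure (r : ℝ≥0) (k : ℕ) :
    ∫ n, (n.descFactorial k : ℝ) ∂Po(r) = r ^ k := by
  rw [integral_poissonMeasure, (hasSum_descFactorial_poissonMeasure r k).tsum_eq]

section IndependentPoisson

variable {Ω : Type*} [MeasurableSpace Ω] {μ : Measure Ω} {X Z : Ω → ℕ} {a b : ℝ≥0}

theorem HasLaw.integrable_descFactorial (hX : HasLaw X Po(a) μ) (k : ℕ) :
    Integrable (fun ω ↦ ((X ω).descFactorial k : ℝ)) μ := by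
  have h := integrable_descFactorial_poissonMeasure a k
  rwa [← hX.map_eq, integrable_map_measure .of_discrete hX.aemeasurable] at h

theorem HasLaw.integral_descFactorial (hX : HasLaw X Po(a) μ) (k : ℕ) :
    ∫ ω, ((X ω).descFactorial k : ℝ) ∂μ = a ^ k :=
  (hX.integral_comp (f := fun n : ℕ ↦ (n.descFactorial k : ℝ)) .of_discrete).trans
    (integral_descFactorial_poissonMeasure a k)

theorem IndepFun.descFactorial (hXZ : IndepFun X Z μ) (j k : ℕ) :
    IndepFun (fun ω ↦ ((X ω).descFactorial j : ℝ)) (fun ω ↦ ((Z ω).descFactorial k : ℝ)) μ :=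
  hXZ.comp (measurable_from_nat (f := fun n ↦ (n.descFactorial j : ℝ)))
    (measurable_from_nat (f := fun n ↦ (n.descFactorial k : ℝ)))

theorem IndepFun.integrable_descFactorial_mul_descFactorial (hX : HasLaw X Po(a) μ)
    (hZ : HasLaw Z Po(b) μ) (hXZ : IndepFun X Z μ) (j k : ℕ) :
    Integrable (fun ω ↦ ((X ω).descFactorial j : ℝ) * (Z ω).descFactorial k) μ :=
  (hXZ.descFactorial j k).integrable_mul (hX.integrable_descFactorial j)
    (hZ.integrable_descFactorial k)

theorem IndepFun.integral_descFactorial_mul_descFactorial (hX : HasLaw X Po(a) μ)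
    (hZ : HasLaw Z Po(b) μ) (hXZ : IndepFun X Z μ) (j k : ℕ) :
    ∫ ω, ((X ω).descFactorial j : ℝ) * (Z ω).descFactorial k ∂μ = a ^ j * b ^ k := by
  rw [← hX.integral_descFactorial j, ← hZ.integral_descFactorial k]
  exact (hXZ.descFactorial j k).integral_mul_eq_mul_integral
    (hX.integrable_descFactorial j).1 (hZ.integrable_descFactorial k).1

theorem IndepFun.integrable_sum_descFactorial_mul_descFactorial (hX : HasLaw X Po(a) μ)
    (hZ : HasLaw Z Po(b) μ) (hXZ : IndepFun X Z μ) {N : ℕ} (c : Fin N → Fin N → ℝ) :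
    Integrable (fun ω ↦ ∑ j, ∑ k,
      c j k * (((X ω).descFactorial j : ℝ) * (Z ω).descFactorial k)) μ :=
  integrable_finsetSum _ fun j _ ↦ integrable_finsetSum _ fun k _ ↦
    (hXZ.integrable_descFactorial_mul_descFactorial hX hZ j k).const_mul (c j k)

theorem IndepFun.integral_sum_descFactorial_mul_descFactorial (hX : HasLaw X Po(a) μ)
    (hZ : HasLaw Z Po(b) μ) (hXZ : IndepFun X Z μ) {N : ℕ} (c : Fin N → Fin N → ℝ) :
    ∫ ω, ∑ j, ∑ k, c j k * (((X ω).descFactorial j : ℝ) * (Z ω).descFactorial k) ∂μ =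
      ∑ j, ∑ k, c j k * (a ^ (j : ℕ) * b ^ (k : ℕ)) := by
  have hint (j k : Fin N) :=
    (hXZ.integrable_descFactorial_mul_descFactorial hX hZ j k).const_mul (c j k)
  rw [integral_finsetSum _ fun j _ ↦ integrable_finsetSum _ fun k _ ↦ hint j k]
  refine sum_congr rfl fun j _ ↦ ?_
  rw [integral_finsetSum _ fun k _ ↦ hint j k]
  simp only [integral_const_mul, hXZ.integral_descFactorial_mul_descFactorial hX hZ]

theorem IndepFun.variance_sq_sub_sub_poissonMeasure [IsProbabilityMeasure μ]
    (hX : HasLaw X Po(a) μ) (hZ : HasLaw Z Po(b) μ) (hXZ : IndepFun X Z μ) :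
    Var[fun ω ↦ ((X ω : ℝ) - Z ω) ^ 2 - X ω - Z ω; μ] =
      4 * ((a : ℝ) - b) ^ 2 * (a + b) + 2 * ((a : ℝ) + b) ^ 2 := by
  set G : Ω → ℝ := fun ω ↦ ((X ω : ℝ) - Z ω) ^ 2 - X ω - Z ω
  -- coefficients of `G` and `G ^ 2` in the basis `X^{(j)} Z^{(k)}`, row `j`, column `k`
  set cG : Fin 3 → Fin 3 → ℝ := !![0, 0, 1; 0, -2, 0; 1, 0, 0]
  set cG2 : Fin 5 → Fin 5 → ℝ :=
    !![0, 0, 2, 4, 1; 0, 4, -4, -4, 0; 2, -4, 6, 0, 0; 4, -4, 0, 0, 0; 1, 0, 0, 0, 0]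
  have hG : G = fun ω ↦
      ∑ j, ∑ k, cG j k * (((X ω).descFactorial j : ℝ) * (Z ω).descFactorial k) := by
    ext ω
    simp only [G, cG, Fin.sum_univ_succ, Fin.sum_univ_zero, Matrix.of_apply,
      Matrix.cons_val_zero, Matrix.cons_val_succ, Fin.val_zero, Fin.val_succ,
      Nat.cast_descFactorial_eq_prod_range, prod_range_succ, prod_range_zero]
    ring
  have hG2 : G ^ 2 = fun ω ↦
      ∑ j, ∑ k, cG2 j k * (((X ω).descFactorial j : ℝ) * (Z ω).descFactorial k) := by
    ext ω
    simp only [Pi.pow_apply, G, cG2, Fin.sum_univ_succ, Fin.sum_univ_zero, Matrix.of_apply,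
      Matrix.cons_val_zero, Matrix.cons_val_succ, Fin.val_zero, Fin.val_succ,
      Nat.cast_descFactorial_eq_prod_range, prod_range_succ, prod_range_zero]
    ring
  have hmem : MemLp G 2 μ := by
    refine (memLp_two_iff_integrable_sq ?_).2 ?_
    · rw [hG]
      exact (hXZ.integrable_sum_descFactorial_mul_descFactorial hX hZ cG).aestronglyMeasurable
    · simpa only [← Pi.pow_apply, hG2] using
        hXZ.integrable_sum_descFactorial_mul_descFactorial hX hZ cG2
  rw [variance_eq_sub hmem, hG2, hG, hXZ.integral_sum_descFactorial_mul_descFactorial hX hZ,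
    hXZ.integral_sum_descFactorial_mul_descFactorial hX hZ]
  simp only [cG, cG2, Fin.sum_univ_succ, Fin.sum_univ_zero, Matrix.of_apply,
    Matrix.cons_val_zero, Matrix.cons_val_succ, Fin.val_zero, Fin.val_succ]
  ring

end IndependentPoisson

end ProbabilityTheory

theorem stmt7_general (U n m : ℕ)
    (P Q : Fin U → Fin n → ℝ≥0)
    {Ω : Type*} [MeasurableSpace Ω] (μ : Measure Ω) [IsProbabilityMeasure μ]
    (V Y : Fin U → Fin n → Ω → ℕ)
    (hVmeas : ∀ u i, Measurable (V u i)) (hYmeas : ∀ u i, Measurable (Y u i))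
    (hVdist : ∀ u i, μ.map (V u i) = poissonMeasure (m * P u i))
    (hYdist : ∀ u i, μ.map (Y u i) = poissonMeasure (m * Q u i))
    (hindep : iIndepFun
      (fun p : Fin U × Fin n × Bool =>
        if p.2.2 then V p.1 p.2.1 else Y p.1 p.2.1) μ)
    (u : Fin U) (i : Fin n) :
    variance
        (fun ω => (((V u i ω : ℝ) - (Y u i ω : ℝ)) ^ 2 - (V u i ω : ℝ) - (Y u i ω : ℝ))) μ =
      4 * (m : ℝ) ^ 3 * ((P u i : ℝ) - (Q u i : ℝ)) ^ 2 * ((P u i : ℝ) + (Q u i : ℝ)) +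
        2 * (m : ℝ) ^ 2 * ((P u i : ℝ) + (Q u i : ℝ)) ^ 2 := by
  have hV : HasLaw (V u i) Po(m * P u i) μ := ⟨(hVmeas u i).aemeasurable, hVdist u i⟩
  have hY : HasLaw (Y u i) Po(m * Q u i) μ := ⟨(hYmeas u i).aemeasurable, hYdist u i⟩
  have hVY : IndepFun (V u i) (Y u i) μ := by
    simpa using hindep.indepFun (i := (u, i, true)) (j := (u, i, false)) (by simp)
  rw [hVY.variance_sq_sub_sub_poissonMeasure hV hY]
  push_cast
  ring

/-- With `V_{u,i} ~ Poisson(m·P_{u,i})`, `Y_{u,i} ~ Poisson(m·Q_{u,i})`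
mutually independent, the variance of
`G_{u,i} = (V_{u,i} − Y_{u,i})² − V_{u,i} − Y_{u,i}` equals
`4·m³·(P_{u,i} − Q_{u,i})²·(P_{u,i} + Q_{u,i}) + 2·m²·(P_{u,i} + Q_{u,i})²`. -/
theorem stmt7 (U n m : ℕ) (hU : 1 ≤ U) (hn : 1 ≤ n) (hm : 1 ≤ m)
    (P Q : Fin U → Fin n → ℝ≥0)
    (hP : ∀ u, ∑ i, P u i = 1) (hQ : ∀ u, ∑ i, Q u i = 1)
    {Ω : Type*} [MeasurableSpace Ω] (μ : Measure Ω) [IsProbabilityMeasure μ]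
    (V Y : Fin U → Fin n → Ω → ℕ)
    (hVmeas : ∀ u i, Measurable (V u i)) (hYmeas : ∀ u i, Measurable (Y u i))
    (hVdist : ∀ u i, μ.map (V u i) = poissonMeasure (m * P u i))
    (hYdist : ∀ u i, μ.map (Y u i) = poissonMeasure (m * Q u i))
    (hindep : iIndepFun
      (fun p : Fin U × Fin n × Bool =>
        if p.2.2 then V p.1 p.2.1 else Y p.1 p.2.1) μ)
    (u : Fin U) (i : Fin n) :
    variance
        (fun ω => (((V u i ω : ℝ) - (Y u i ω : ℝ)) ^ 2 - (V u i ω : ℝ) - (Y u i ω : ℝ))) μ =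
      4 * (m : ℝ) ^ 3 * ((P u i : ℝ) - (Q u i : ℝ)) ^ 2 * ((P u i : ℝ) + (Q u i : ℝ)) +
        2 * (m : ℝ) ^ 2 * ((P u i : ℝ) + (Q u i : ℝ)) ^ 2 :=
  stmt7_general U n m P Q μ V Y hVmeas hYmeas hVdist hYdist hindep u i
end

section
/- Let δ₁ ∈ (0,1) and suppose c₁ > 0 is a constant such that E[f̂_{u,i}] ≤ c₁ · f_{u,i} for all u ∈ [U] and i ∈ [n]. Then with probability at least 1 − δ₁ over the randomness of (Ṽ_{u,i}, Ỹ_{u,i}), the conditional expectation of G given the f̂_{u,i} satisfies E[ G | f̂_{u,i}, u ∈ [U], i ∈ [n] ] ≥ δ₁ · m² · ( ∑_{u=1}^U ‖P_u − Q_u‖₁ )² / ( c₁ · ∑_{u=1}^U ∑_{i=1}^n f_{u,i} ). -/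
open MeasureTheory ProbabilityTheory NNReal

/-- The deterministic normalizing quantity `f_{u,i}` (with `p = P_{u,i}`, `q = Q_{u,i}`):
`max{√(mn)·|p−q|, n·(p+q), 1}` if `m > n`, and `max{m·(p+q), 1}` otherwise. -/
noncomputable def fui (m n : ℕ) (p q : ℝ) : ℝ :=
  if n < m then max (max (Real.sqrt (m * n) * |p - q|) ((n : ℝ) * (p + q))) 1
  else max ((m : ℝ) * (p + q)) 1

/-- The empirical estimate `f̂_{u,i}`, as a function of the counts `ṽ = Ṽ_{u,i}` and
`ỹ = Ỹ_{u,i}`: `max{|ṽ−ỹ|/√(m/n), (ṽ+ỹ)/(m/n), 1}` if `m > n`, and `max{ṽ+ỹ, 1}`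
otherwise. -/
noncomputable def fuiHat (m n : ℕ) (v y : ℕ) : ℝ :=
  if n < m then
    max (max (|(v : ℝ) - (y : ℝ)| / Real.sqrt ((m : ℝ) / n))
      (((v : ℝ) + (y : ℝ)) / ((m : ℝ) / n))) 1
  else max ((v : ℝ) + (y : ℝ)) 1

/-- `G_{u,i}` as a function of the counts `v = V_{u,i}` and `y = Y_{u,i}`:
`(v − y)² − v − y`. -/
def Gui (v y : ℕ) : ℝ := ((v : ℝ) - (y : ℝ)) ^ 2 - (v : ℝ) - (y : ℝ)

/-! Since `(v - y)² - v - y = v(v - 1) + y(y - 1) - 2vy` and the factorial moment `E[X(X - 1)]`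
of `X ~ Poisson(r)` is `r²`, independence gives `E[G_{u,i}] = m² (P_{u,i} - Q_{u,i})²`. By
Cauchy–Schwarz, `∑ a_k² / f̂_k ≥ (∑ a_k)² / ∑ f̂_k` with `a_k = m |P_{u,i} - Q_{u,i}|`, and by
Markov's inequality `δ₁ ∑ f̂_k < c₁ ∑ f_k` with probability at least `1 - δ₁`. -/

lemma Nat.cast_mul_cast_sub_one_nonneg (n : ℕ) : 0 ≤ (n : ℝ) * (n - 1) := by
  rcases n with _ | n
  · simp
  · push_cast
    rw [add_sub_cancel_right]
    positivity

lemma mul_sq_sum_div_le_sum_sq_div {ι : Type*} (s : Finset ι) (a : ι → ℝ) {g : ι → ℝ}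
    (hg : ∀ i ∈ s, 0 < g i) {δ C : ℝ} (hδ : 0 ≤ δ) (hC : 0 < C)
    (hgC : δ * ∑ i ∈ s, g i ≤ C) :
    δ * (∑ i ∈ s, a i) ^ 2 / C ≤ ∑ i ∈ s, a i ^ 2 / g i := by
  have cauchySchwarz : (∑ i ∈ s, a i) ^ 2 ≤ (∑ i ∈ s, a i ^ 2 / g i) * ∑ i ∈ s, g i :=
    Finset.sum_sq_le_sum_mul_sum_of_sq_le_mul s
      (fun i hi ↦ div_nonneg (sq_nonneg _) (hg i hi).le) (fun i hi ↦ (hg i hi).le)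
      (fun i hi ↦ (div_mul_cancel₀ _ (hg i hi).ne').ge)
  have hq : 0 ≤ ∑ i ∈ s, a i ^ 2 / g i :=
    Finset.sum_nonneg fun i hi ↦ div_nonneg (sq_nonneg _) (hg i hi).le
  rw [div_le_iff₀ hC]
  calc δ * (∑ i ∈ s, a i) ^ 2 ≤ δ * ((∑ i ∈ s, a i ^ 2 / g i) * ∑ i ∈ s, g i) := by gcongr
    _ = (∑ i ∈ s, a i ^ 2 / g i) * (δ * ∑ i ∈ s, g i) := by ring
    _ ≤ (∑ i ∈ s, a i ^ 2 / g i) * C := by gcongr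

namespace ProbabilityTheory

open Real Nat

variable {Ω : Type*} {mΩ : MeasurableSpace Ω} {μ : Measure Ω}

lemma poisson_weight_succ_mul (r : ℝ≥0) (n : ℕ) :
    exp (-r) * r ^ (n + 1) / (n + 1)! * (n + 1) = r * (exp (-r) * r ^ n / n !) := by
  rw [Nat.factorial_succ]
  push_cast
  field_simp
  ring

lemma hasSum_poisson_weight_mul_cast (r : ℝ≥0) :
    HasSum (fun n : ℕ ↦ exp (-r) * r ^ n / n ! * n) r := by
  refine (hasSum_nat_add_iff' 1).mp ?_
  simpa [poisson_weight_succ_mul] using (hasSum_one_poissonMeasure r).mul_left (r : ℝ)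

lemma hasSum_poisson_weight_mul_cast_mul_cast_sub_one (r : ℝ≥0) :
    HasSum (fun n : ℕ ↦ exp (-r) * r ^ n / n ! * (n * (n - 1))) ((r : ℝ) ^ 2) := by
  have shift (n : ℕ) :
      exp (-r) * r ^ (n + 1) / (n + 1)! * (((n + 1 : ℕ) : ℝ) * ((n + 1 : ℕ) - 1)) =
        r * (exp (-r) * r ^ n / n ! * n) := by
    push_cast
    rw [add_sub_cancel_right, ← mul_assoc, poisson_weight_succ_mul]
    ring
  refine (hasSum_nat_add_iff' 1).mp ?_
  simp only [shift]
  simpa [sq] using (hasSum_poisson_weight_mul_cast r).mul_left (r : ℝ)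

section HasLawPoisson

variable {X : Ω → ℕ} {r : ℝ≥0} {f : ℕ → ℝ}

lemma HasLaw.integrable_comp_of_poissonMeasure (hX : HasLaw X (poissonMeasure r) μ)
    (hf : ∀ n, 0 ≤ f n) (hsum : Summable fun n ↦ exp (-r) * r ^ n / n ! * f n) :
    Integrable (fun ω ↦ f (X ω)) μ := by
  have : Integrable f (poissonMeasure r) := by
    rw [integrable_poissonMeasure_iff]
    simpa only [Real.norm_eq_abs, abs_of_nonneg (hf _)] using hsum
  rw [← hX.map_eq] at this
  exact (integrable_map_measure .of_discrete hX.aemeasurable).mp this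

lemma HasLaw.integral_comp_of_poissonMeasure (hX : HasLaw X (poissonMeasure r) μ) {s : ℝ}
    (hsum : HasSum (fun n ↦ exp (-r) * r ^ n / n ! * f n) s) :
    ∫ ω, f (X ω) ∂μ = s := by
  rw [← Function.comp_def, hX.integral_comp .of_discrete, integral_poissonMeasure]
  exact hsum.tsum_eq

lemma HasLaw.integrable_cast_of_poissonMeasure (hX : HasLaw X (poissonMeasure r) μ) :
    Integrable (fun ω ↦ (X ω : ℝ)) μ :=
  hX.integrable_comp_of_poissonMeasure (fun n ↦ n.cast_nonneg)
    (hasSum_poisson_weight_mul_cast r).summable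

end HasLawPoisson

lemma IndepFun.integral_gui_of_poissonMeasure {X Y : Ω → ℕ} {a b : ℝ≥0}
    (hX : HasLaw X (poissonMeasure a) μ) (hY : HasLaw Y (poissonMeasure b) μ)
    (hXY : IndepFun X Y μ) :
    ∫ ω, Gui (X ω) (Y ω) ∂μ = ((a : ℝ) - b) ^ 2 := by
  have iX := hX.integrable_cast_of_poissonMeasure
  have iY := hY.integrable_cast_of_poissonMeasure
  have iX2 := hX.integrable_comp_of_poissonMeasure Nat.cast_mul_cast_sub_one_nonneg
    (hasSum_poisson_weight_mul_cast_mul_cast_sub_one a).summable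
  have iY2 := hY.integrable_comp_of_poissonMeasure Nat.cast_mul_cast_sub_one_nonneg
    (hasSum_poisson_weight_mul_cast_mul_cast_sub_one b).summable
  have hXYR : IndepFun (fun ω ↦ (X ω : ℝ)) (fun ω ↦ (Y ω : ℝ)) μ :=
    hXY.comp measurable_from_top measurable_from_top
  have iXY : Integrable (fun ω ↦ (X ω : ℝ) * Y ω) μ := hXYR.integrable_mul iX iY
  have eXY : ∫ ω, (X ω : ℝ) * Y ω ∂μ = a * b := by
    rw [hXYR.integral_fun_mul_eq_mul_integral iX.aestronglyMeasurable iY.aestronglyMeasurable,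
      hX.integral_comp_of_poissonMeasure (hasSum_poisson_weight_mul_cast a),
      hY.integral_comp_of_poissonMeasure (hasSum_poisson_weight_mul_cast b)]
  calc ∫ ω, Gui (X ω) (Y ω) ∂μ
      = ∫ ω, ((X ω : ℝ) * (X ω - 1) + (Y ω : ℝ) * (Y ω - 1) - 2 * ((X ω : ℝ) * Y ω)) ∂μ := by
        congr with ω
        unfold Gui
        ring
    _ = (a : ℝ) ^ 2 + (b : ℝ) ^ 2 - 2 * (a * b) := by
        rw [integral_sub (iX2.fun_add iY2) (iXY.const_mul 2), integral_add iX2 iY2,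
          integral_const_mul, eXY,
          hX.integral_comp_of_poissonMeasure (hasSum_poisson_weight_mul_cast_mul_cast_sub_one a),
          hY.integral_comp_of_poissonMeasure (hasSum_poisson_weight_mul_cast_mul_cast_sub_one b)]
    _ = ((a : ℝ) - b) ^ 2 := by ring

lemma ofReal_one_sub_le_measure_mul_lt [IsProbabilityMeasure μ] {S : Ω → ℝ}
    (hS₀ : 0 ≤ᵐ[μ] S) (hS : Integrable S μ) {δ C : ℝ} (hδ : 0 < δ) (hC : 0 < C)
    (hSC : ∫ ω, S ω ∂μ ≤ C) :
    ENNReal.ofReal (1 - δ) ≤ μ {ω | δ * S ω < C} := by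
  have hCδ : 0 < C / δ := div_pos hC hδ
  have markov : μ.real {ω | C / δ ≤ S ω} ≤ δ := by
    refine le_of_mul_le_mul_left ?_ hCδ
    calc C / δ * μ.real {ω | C / δ ≤ S ω} ≤ C :=
          (mul_meas_ge_le_integral_of_nonneg hS₀ hS _).trans hSC
      _ = C / δ * δ := by field_simp
  have hcompl : {ω | δ * S ω < C}ᶜ = {ω | C / δ ≤ S ω} := by
    ext ω
    simp [div_le_iff₀' hδ]
  calc ENNReal.ofReal (1 - δ) = 1 - ENNReal.ofReal δ := by
        rw [ENNReal.ofReal_sub _ hδ.le, ENNReal.ofReal_one]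
    _ ≤ 1 - μ {ω | δ * S ω < C}ᶜ := by
        rw [hcompl]
        gcongr
        rwa [ENNReal.le_ofReal_iff_toReal_le (measure_ne_top _ _) hδ.le]
    _ ≤ μ {ω | δ * S ω < C} := by
        rw [tsub_le_iff_right, ← measure_univ (μ := μ)]
        exact measure_univ_le_add_compl _

theorem ofReal_one_sub_le_measure_mul_sq_sum_div_le {ι : Type*} [Fintype ι]
    [IsProbabilityMeasure μ] (a : ι → ℝ) (g : ι → Ω → ℝ) (f : ι → ℝ) (hg : ∀ i ω, 0 < g i ω)
    (hgi : ∀ i, Integrable (g i) μ) (hgf : ∀ i, ∫ ω, g i ω ∂μ ≤ f i) {δ : ℝ} (hδ : 0 < δ)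
    (hf : 0 < ∑ i, f i) :
    ENNReal.ofReal (1 - δ) ≤
      μ {ω | δ * (∑ i, a i) ^ 2 / ∑ i, f i ≤ ∑ i, a i ^ 2 / g i ω} := by
  have hS : ∫ ω, ∑ i, g i ω ∂μ ≤ ∑ i, f i := by
    rw [integral_finsetSum _ fun i _ ↦ hgi i]
    exact Finset.sum_le_sum fun i _ ↦ hgf i
  refine (ofReal_one_sub_le_measure_mul_lt
      (ae_of_all _ fun ω ↦ Finset.sum_nonneg fun i _ ↦ (hg i ω).le)
      (integrable_finsetSum _ fun i _ ↦ hgi i) hδ hf hS).trans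
    (measure_mono fun ω hω ↦ ?_)
  exact mul_sq_sum_div_le_sum_sq_div _ a (fun i _ ↦ hg i ω) hδ.le hf hω.le

end ProbabilityTheory

lemma one_le_fui (m n : ℕ) (p q : ℝ) : 1 ≤ fui m n p q := by
  unfold fui
  split_ifs <;> exact le_max_right _ _

lemma one_le_fuiHat (m n v y : ℕ) : 1 ≤ fuiHat m n v y := by
  unfold fuiHat
  split_ifs <;> exact le_max_right _ _

lemma fuiHat_le_add_add_one (m n v y : ℕ) : fuiHat m n v y ≤ v + y + 1 := by
  have hv : (0 : ℝ) ≤ v := v.cast_nonneg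
  have hy : (0 : ℝ) ≤ y := y.cast_nonneg
  have habs : |(v : ℝ) - y| ≤ v + y := abs_le.mpr ⟨by linarith, by linarith⟩
  unfold fuiHat
  split_ifs with hnm
  · rcases n.eq_zero_or_pos with rfl | hn
    · simp only [CharP.cast_eq_zero, div_zero, Real.sqrt_zero]
      exact max_le (max_le (by positivity) (by positivity)) (by linarith)
    have hmn : 1 ≤ (m : ℝ) / n := (one_le_div (by positivity)).mpr (by exact_mod_cast hnm.le)
    have hsqrt : 1 ≤ Real.sqrt ((m : ℝ) / n) := Real.one_le_sqrt.mpr hmn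
    refine max_le (max_le ?_ ?_) (by linarith)
    · linarith [div_le_self (abs_nonneg ((v : ℝ) - y)) hsqrt]
    · linarith [div_le_self (add_nonneg hv hy) hmn]
  · exact max_le (by linarith) (by linarith)

lemma ProbabilityTheory.HasLaw.integrable_fuiHat {Ω : Type*} {mΩ : MeasurableSpace Ω}
    {μ : Measure Ω} [IsFiniteMeasure μ] {V Y : Ω → ℕ} {a b : ℝ≥0}
    (hV : HasLaw V (poissonMeasure a) μ) (hY : HasLaw Y (poissonMeasure b) μ) (m n : ℕ) :
    Integrable (fun ω ↦ fuiHat m n (V ω) (Y ω)) μ := by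
  have hsum := (hV.integrable_cast_of_poissonMeasure.fun_add
    hY.integrable_cast_of_poissonMeasure).fun_add (integrable_const 1)
  refine hsum.mono' ?_ (ae_of_all _ fun ω ↦ ?_)
  · exact ((measurable_of_countable (Function.uncurry (fuiHat m n))).comp_aemeasurable
      (hV.aemeasurable.prodMk hY.aemeasurable)).aestronglyMeasurable
  · rw [Real.norm_of_nonneg (zero_le_one.trans (one_le_fuiHat ..))]
    exact fuiHat_le_add_add_one ..

theorem stmt8_general (U n m : ℕ) (hU : 1 ≤ U) (hn : 1 ≤ n)
    (P Q : Fin U → Fin n → ℝ≥0)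
    {Ω : Type*} [MeasurableSpace Ω] (μ : Measure Ω) [IsProbabilityMeasure μ]
    (V Y V' Y' : Fin U → Fin n → Ω → ℕ)
    (hVmeas : ∀ u i, Measurable (V u i)) (hYmeas : ∀ u i, Measurable (Y u i))
    (hV'meas : ∀ u i, Measurable (V' u i)) (hY'meas : ∀ u i, Measurable (Y' u i))
    (hVdist : ∀ u i, μ.map (V u i) = poissonMeasure (m * P u i))
    (hYdist : ∀ u i, μ.map (Y u i) = poissonMeasure (m * Q u i))
    (hV'dist : ∀ u i, μ.map (V' u i) = poissonMeasure (m * P u i))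
    (hY'dist : ∀ u i, μ.map (Y' u i) = poissonMeasure (m * Q u i))
    (hindep : iIndepFun
      (fun p : (Fin U × Fin n) × Fin 4 =>
        ![V p.1.1 p.1.2, Y p.1.1 p.1.2, V' p.1.1 p.1.2, Y' p.1.1 p.1.2] p.2) μ)
    (δ₁ : ℝ) (hδ₁ : 0 < δ₁)
    (c₁ : ℝ) (hc₁ : 0 < c₁)
    (hc₁bound : ∀ u i, ∫ ω, fuiHat m n (V' u i ω) (Y' u i ω) ∂μ ≤
      c₁ * fui m n (P u i) (Q u i)) :
    ENNReal.ofReal (1 - δ₁) ≤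
      μ {ω | δ₁ * (m : ℝ) ^ 2 * (∑ u, ∑ i, |(P u i : ℝ) - (Q u i : ℝ)|) ^ 2 /
          (c₁ * ∑ u, ∑ i, fui m n (P u i) (Q u i)) ≤
        ∑ u, ∑ i, (∫ ω', Gui (V u i ω') (Y u i ω') ∂μ) /
          fuiHat m n (V' u i ω) (Y' u i ω)} := by
  have hEG (u : Fin U) (i : Fin n) :
      ∫ ω, Gui (V u i ω) (Y u i ω) ∂μ = ((m : ℝ) * |(P u i : ℝ) - Q u i|) ^ 2 := by
    have hVY : IndepFun (V u i) (Y u i) μ := by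
      simpa using hindep.indepFun (i := ((u, i), 0)) (j := ((u, i), 1)) (by simp)
    rw [hVY.integral_gui_of_poissonMeasure ⟨(hVmeas u i).aemeasurable, hVdist u i⟩
      ⟨(hYmeas u i).aemeasurable, hYdist u i⟩]
    push_cast
    rw [mul_pow, sq_abs, ← mul_sub, mul_pow]
  have hF : 0 < ∑ p : Fin U × Fin n, c₁ * fui m n (P p.1 p.2) (Q p.1 p.2) :=
    Finset.sum_pos (fun p _ ↦ mul_pos hc₁ (zero_lt_one.trans_le (one_le_fui ..)))
      ⟨(⟨0, hU⟩, ⟨0, hn⟩), Finset.mem_univ _⟩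
  have key := ofReal_one_sub_le_measure_mul_sq_sum_div_le (μ := μ)
    (fun p : Fin U × Fin n ↦ (m : ℝ) * |(P p.1 p.2 : ℝ) - Q p.1 p.2|)
    (fun p ω ↦ fuiHat m n (V' p.1 p.2 ω) (Y' p.1 p.2 ω))
    (fun p ↦ c₁ * fui m n (P p.1 p.2) (Q p.1 p.2))
    (fun p ω ↦ zero_lt_one.trans_le (one_le_fuiHat ..))
    (fun p ↦ HasLaw.integrable_fuiHat ⟨(hV'meas p.1 p.2).aemeasurable, hV'dist p.1 p.2⟩
      ⟨(hY'meas p.1 p.2).aemeasurable, hY'dist p.1 p.2⟩ m n)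
    (fun p ↦ hc₁bound p.1 p.2) hδ₁ hF
  refine key.trans (measure_mono fun ω hω ↦ ?_)
  simp only [Set.mem_ofPred_eq, Fintype.sum_prod_type, ← Finset.mul_sum] at hω
  simp only [Set.mem_ofPred_eq, hEG]
  convert hω using 2
  ring

/-- Let `δ₁ ∈ (0,1)` and `c₁ > 0` with `E[f̂_{u,i}] ≤ c₁·f_{u,i}` for all
`u, i`. Then with probability at least `1 − δ₁` over the randomness of `(Ṽ, Ỹ)`, the
conditional expectation `E[G | f̂] = ∑_{u,i} E[G_{u,i}]/f̂_{u,i}` satisfies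
`E[G | f̂] ≥ δ₁·m²·(∑_u ‖P_u − Q_u‖₁)² / (c₁·∑_{u,i} f_{u,i})`. -/
theorem stmt8 (U n m : ℕ) (hU : 1 ≤ U) (hn : 1 ≤ n) (hm : 1 ≤ m)
    (P Q : Fin U → Fin n → ℝ≥0)
    (hP : ∀ u, ∑ i, P u i = 1) (hQ : ∀ u, ∑ i, Q u i = 1)
    {Ω : Type*} [MeasurableSpace Ω] (μ : Measure Ω) [IsProbabilityMeasure μ]
    (V Y V' Y' : Fin U → Fin n → Ω → ℕ)
    (hVmeas : ∀ u i, Measurable (V u i)) (hYmeas : ∀ u i, Measurable (Y u i))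
    (hV'meas : ∀ u i, Measurable (V' u i)) (hY'meas : ∀ u i, Measurable (Y' u i))
    (hVdist : ∀ u i, μ.map (V u i) = poissonMeasure (m * P u i))
    (hYdist : ∀ u i, μ.map (Y u i) = poissonMeasure (m * Q u i))
    (hV'dist : ∀ u i, μ.map (V' u i) = poissonMeasure (m * P u i))
    (hY'dist : ∀ u i, μ.map (Y' u i) = poissonMeasure (m * Q u i))
    (hindep : iIndepFun
      (fun p : (Fin U × Fin n) × Fin 4 =>
        ![V p.1.1 p.1.2, Y p.1.1 p.1.2, V' p.1.1 p.1.2, Y' p.1.1 p.1.2] p.2) μ)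
    (δ₁ : ℝ) (hδ₁ : 0 < δ₁) (hδ₁' : δ₁ < 1)
    (c₁ : ℝ) (hc₁ : 0 < c₁)
    (hc₁bound : ∀ u i, ∫ ω, fuiHat m n (V' u i ω) (Y' u i ω) ∂μ ≤
      c₁ * fui m n (P u i) (Q u i)) :
    ENNReal.ofReal (1 - δ₁) ≤
      μ {ω | δ₁ * (m : ℝ) ^ 2 * (∑ u, ∑ i, |(P u i : ℝ) - (Q u i : ℝ)|) ^ 2 /
          (c₁ * ∑ u, ∑ i, fui m n (P u i) (Q u i)) ≤
        ∑ u, ∑ i, (∫ ω', Gui (V u i ω') (Y u i ω') ∂μ) /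
          fuiHat m n (V' u i ω) (Y' u i ω)} :=
  stmt8_general U n m hU hn P Q μ V Y V' Y' hVmeas hYmeas hV'meas hY'meas hVdist hYdist hV'dist
    hY'dist hindep δ₁ hδ₁ c₁ hc₁ hc₁bound
end

section
/- If m ≤ n, then for every u ∈ [U], ∑_{i=1}^n Var(G_{u,i}) / f_{u,i}² ≤ 24·m, where Var(G_{u,i}) = 4·m³·(P_{u,i}−Q_{u,i})²·(P_{u,i}+Q_{u,i}) + 2·m²·(P_{u,i}+Q_{u,i})². -/
open NNReal

lemma fui_of_le {m n : ℕ} (h : m ≤ n) (p q : ℝ) :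
    fui m n p q = max ((m : ℝ) * (p + q)) 1 := by
  simp [fui, not_lt.mpr h]

/- With `f = max x 1` we have `x ≤ f` and `x ≤ f²`, so `x³ ≤ x f²` and `x² ≤ x f²`. -/
lemma cube_add_sq_div_max_one_sq_le {x : ℝ} (hx : 0 ≤ x) :
    (4 * x ^ 3 + 2 * x ^ 2) / (max x 1) ^ 2 ≤ 6 * x := by
  have hxf : x ≤ max x 1 := le_max_left x 1
  have hf1 : 1 ≤ max x 1 := le_max_right x 1
  rw [div_le_iff₀ (by positivity)]
  nlinarith [mul_le_mul hxf hxf hx (by linarith), mul_le_mul_of_nonneg_left hxf hx,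
    mul_le_mul_of_nonneg_left hf1 hx]

lemma variance_div_max_sq_le {m p q : ℝ} (hm : 0 ≤ m) (hp : 0 ≤ p) (hq : 0 ≤ q) :
    (4 * m ^ 3 * (p - q) ^ 2 * (p + q) + 2 * m ^ 2 * (p + q) ^ 2) / (max (m * (p + q)) 1) ^ 2
      ≤ 6 * (m * (p + q)) := by
  have hdiff : (p - q) ^ 2 ≤ (p + q) ^ 2 := by nlinarith [mul_nonneg hp hq]
  have hnum : 4 * m ^ 3 * (p - q) ^ 2 * (p + q) + 2 * m ^ 2 * (p + q) ^ 2
      ≤ 4 * (m * (p + q)) ^ 3 + 2 * (m * (p + q)) ^ 2 := by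
    have := mul_le_mul_of_nonneg_left hdiff (by positivity : 0 ≤ 4 * m ^ 3 * (p + q))
    nlinarith
  calc _ ≤ (4 * (m * (p + q)) ^ 3 + 2 * (m * (p + q)) ^ 2) / (max (m * (p + q)) 1) ^ 2 :=
        div_le_div_of_nonneg_right hnum (by positivity)
    _ ≤ 6 * (m * (p + q)) := cube_add_sq_div_max_one_sq_le (by positivity)

theorem stmt14_general (U n m : ℕ) (hmn : m ≤ n)
    (P Q : Fin U → Fin n → ℝ)
    (hP0 : ∀ u i, 0 ≤ P u i) (hQ0 : ∀ u i, 0 ≤ Q u i)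
    (hP : ∀ u, ∑ i, P u i = 1) (hQ : ∀ u, ∑ i, Q u i = 1) (u : Fin U) :
    ∑ i,
        (4 * (m : ℝ) ^ 3 * (P u i - Q u i) ^ 2 * (P u i + Q u i) +
            2 * (m : ℝ) ^ 2 * (P u i + Q u i) ^ 2) /
          (fui m n (P u i) (Q u i)) ^ 2 ≤ 24 * (m : ℝ) := by
  simp only [fui_of_le hmn]
  calc _ ≤ ∑ i, 6 * ((m : ℝ) * (P u i + Q u i)) := Finset.sum_le_sum fun i _ =>
        variance_div_max_sq_le (Nat.cast_nonneg m) (hP0 u i) (hQ0 u i)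
    _ = 12 * m := by
      rw [← Finset.mul_sum, ← Finset.mul_sum, Finset.sum_add_distrib, hP u, hQ u]; ring
    _ ≤ 24 * m := by linarith [(Nat.cast_nonneg m : (0 : ℝ) ≤ m)]

/-- If `m ≤ n`, then for every `u`,
`∑_i Var(G_{u,i})/f_{u,i}² ≤ 24·m`, where
`Var(G_{u,i}) = 4·m³·(P−Q)²·(P+Q) + 2·m²·(P+Q)²`. -/
theorem stmt14 (U n m : ℕ) (hU : 1 ≤ U) (hn : 1 ≤ n) (hmn : m ≤ n)
    (P Q : Fin U → Fin n → ℝ)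
    (hP0 : ∀ u i, 0 ≤ P u i) (hQ0 : ∀ u i, 0 ≤ Q u i)
    (hP : ∀ u, ∑ i, P u i = 1) (hQ : ∀ u, ∑ i, Q u i = 1) (u : Fin U) :
    ∑ i,
        (4 * (m : ℝ) ^ 3 * (P u i - Q u i) ^ 2 * (P u i + Q u i) +
            2 * (m : ℝ) ^ 2 * (P u i + Q u i) ^ 2) /
          (fui m n (P u i) (Q u i)) ^ 2 ≤ 24 * (m : ℝ) :=
  stmt14_general U n m hmn P Q hP0 hQ0 hP hQ u
end
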